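/- arXiv:2510.26169 — 2 statements merged into one kernel-verified Lean document; each statement's English description precedes it below -/
import Mathlib

section
/- For $\tau \ge \lceil 2n/3 \rceil$, any connected graph on $n$ vertices with dissociation number $\tau$ and the minimum number of edges among such graphs is a tree. -/
open SimpleGraph Finset

/-- `F` is contained in `G` as a subgraph (an injective adjacency-preserving map). -/
def containsCopy {α β : Type*} (F : SimpleGraph α) (G : SimpleGraph β) : Prop :=
  ∃ f : α ↪ β, ∀ a b, F.Adj a b → G.Adj (f a) (f b)

/-- For even `d` this is the cocktail party graph `CP_d` (complete graph minus the
perfect matching pairing `2j, 2j+1`); for odd `d` it is the odd cocktail party graph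
`L_d = CP_{d-1} ∨ K_1`. -/
def cocktail (d : ℕ) : SimpleGraph (Fin d) :=
  SimpleGraph.fromRel (fun i j => (i : ℕ) / 2 ≠ (j : ℕ) / 2)

/-- `S` is a dissociation set of `G`: every vertex of `S` has at most one neighbor in `S`. -/
def IsDissocSet {V : Type*} (G : SimpleGraph V) (S : Finset V) : Prop :=
  ∀ v ∈ S, ({u | u ∈ S ∧ G.Adj v u}).ncard ≤ 1

/-- The dissociation number of `G`. -/
noncomputable def dissocNum {V : Type*} [Fintype V] (G : SimpleGraph V) : ℕ :=
  sSup {k | ∃ S : Finset V, IsDissocSet G S ∧ S.card = k}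



section DissocAPI
variable {V : Type*} [Fintype V]

lemma dissocSet_nonempty (G : SimpleGraph V) :
    {k | ∃ S : Finset V, IsDissocSet G S ∧ S.card = k}.Nonempty :=
  ⟨0, ∅, fun v hv => by simp at hv, rfl⟩

lemma dissocSet_bdd (G : SimpleGraph V) :
    BddAbove {k | ∃ S : Finset V, IsDissocSet G S ∧ S.card = k} := by
  refine ⟨Fintype.card V, ?_⟩
  rintro k ⟨S, _, rfl⟩
  exact S.card_le_univ

lemma le_dissocNum (G : SimpleGraph V) {S : Finset V} (h : IsDissocSet G S) :
    S.card ≤ dissocNum G :=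
  le_csSup (dissocSet_bdd G) ⟨S, h, rfl⟩

lemma dissocNum_le (G : SimpleGraph V) {m : ℕ}
    (h : ∀ S : Finset V, IsDissocSet G S → S.card ≤ m) : dissocNum G ≤ m :=
  csSup_le (dissocSet_nonempty G) (by rintro k ⟨S, hS, rfl⟩; exact h S hS)

lemma exists_max_dissoc (G : SimpleGraph V) :
    ∃ S : Finset V, IsDissocSet G S ∧ S.card = dissocNum G :=
  Nat.sSup_mem (dissocSet_nonempty G) (dissocSet_bdd G)

lemma dissocNum_le_succ [DecidableEq V] (G G' : SimpleGraph V) (v : V)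
    (h : ∀ a b : V, a ≠ v → b ≠ v → (G.Adj a b ↔ G'.Adj a b)) :
    dissocNum G ≤ dissocNum G' + 1 := by
  obtain ⟨S, hS, hcard⟩ := exists_max_dissoc G
  have h1 : IsDissocSet G' (S.erase v) := by
    intro u hu
    have hu' : u ≠ v := Finset.ne_of_mem_erase hu
    have huS : u ∈ S := Finset.mem_of_mem_erase hu
    have hsub : {w | w ∈ S.erase v ∧ G'.Adj u w} ⊆ {w | w ∈ S ∧ G.Adj u w} := by
      rintro w ⟨hw, hadj⟩
      have hw' : w ≠ v := Finset.ne_of_mem_erase hw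
      exact ⟨Finset.mem_of_mem_erase hw, (h u w hu' hw').2 hadj⟩
    exact le_trans (Set.ncard_le_ncard hsub (Set.toFinite _)) (hS u huS)
  have h2 : S.card ≤ (S.erase v).card + 1 := by
    by_cases hv : v ∈ S
    · rw [Finset.card_erase_of_mem hv]
      have : 1 ≤ S.card := Finset.card_pos.2 ⟨v, hv⟩
      omega
    · rw [Finset.erase_eq_of_notMem hv]; omega
  calc dissocNum G = S.card := hcard.symm
    _ ≤ (S.erase v).card + 1 := h2
    _ ≤ dissocNum G' + 1 := by
        have := le_dissocNum G' h1; omega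

end DissocAPI

lemma nat_ivt (f : ℕ → ℕ) (τ : ℕ) (hstep : ∀ k, f (k+1) ≤ f k + 1 ∧ f k ≤ f (k+1) + 1) :
    ∀ N, τ ≤ f 0 → f N ≤ τ → ∃ k, f k = τ := by
  intro N
  induction N with
  | zero => intro h1 h2; exact ⟨0, le_antisymm h2 h1⟩
  | succ N ih =>
    intro h1 h2
    by_cases hN : f N ≤ τ
    · exact ih h1 hN
    · push_neg at hN
      obtain ⟨hs1, hs2⟩ := hstep N
      exact ⟨N+1, by omega⟩

def brm (n m : ℕ) : SimpleGraph (Fin n) :=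
  SimpleGraph.fromRel (fun i j => ((j:ℕ) = (i:ℕ) + 1 ∧ (i:ℕ) < m) ∨ ((i:ℕ) = 0 ∧ m < (j:ℕ)))

lemma brm_adj {n m : ℕ} {a b : Fin n} :
    (brm n m).Adj a b ↔ a ≠ b ∧
      (((b:ℕ) = (a:ℕ)+1 ∧ (a:ℕ) < m) ∨ ((a:ℕ) = (b:ℕ)+1 ∧ (b:ℕ) < m)
        ∨ ((a:ℕ) = 0 ∧ m < (b:ℕ)) ∨ ((b:ℕ) = 0 ∧ m < (a:ℕ))) := by
  simp only [brm, SimpleGraph.fromRel_adj]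
  tauto

lemma brm_connected (n m : ℕ) (hn : 0 < n) : (brm n m).Connected := by
  haveI : Nonempty (Fin n) := ⟨⟨0, hn⟩⟩
  have h0 : ∀ j (hj : j < n), (brm n m).Reachable ⟨0, hn⟩ ⟨j, hj⟩ := by
    intro j
    induction j using Nat.strong_induction_on with
    | _ j ih =>
      intro hj
      rcases Nat.eq_zero_or_pos j with rfl | hjpos
      · exact Reachable.refl _
      · by_cases hjm : j ≤ m
        · have hadj : (brm n m).Adj ⟨j-1, by omega⟩ ⟨j, hj⟩ := by
            rw [brm_adj]
            refine ⟨by simp only [ne_eq, Fin.mk.injEq]; omega,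
              Or.inl ⟨show j = (j-1)+1 by omega, show j-1 < m by omega⟩⟩
          exact (ih (j-1) (by omega) (by omega)).trans hadj.reachable
        · have hadj : (brm n m).Adj ⟨0, hn⟩ ⟨j, hj⟩ := by
            rw [brm_adj]
            refine ⟨by simp only [ne_eq, Fin.mk.injEq]; omega,
              Or.inr (Or.inr (Or.inl ⟨rfl, show m < j by omega⟩))⟩
          exact hadj.reachable
  constructor
  intro a b
  have ha := h0 a.1 a.2
  have hb := h0 b.1 b.2
  simp only [Fin.eta] at ha hb
  exact ha.symm.trans hb

lemma brm_star_dissoc (n : ℕ) (hn : 0 < n) : n - 1 ≤ dissocNum (brm n 0) := by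
  have hdis : IsDissocSet (brm n 0) (Finset.univ.erase ⟨0, hn⟩) := by
    intro v hv
    have hv0 : v ≠ ⟨0, hn⟩ := Finset.ne_of_mem_erase hv
    have hv0' : (v:ℕ) ≠ 0 := by
      simpa only [ne_eq, Fin.ext_iff] using hv0
    have hempty : {u | u ∈ Finset.univ.erase (⟨0, hn⟩ : Fin n) ∧ (brm n 0).Adj v u} = ∅ := by
      ext u
      simp only [Set.mem_setOf_eq, Set.mem_empty_iff_false, iff_false, not_and]
      intro hu hadj
      have hu0' : (u:ℕ) ≠ 0 := by
        simpa only [ne_eq, Fin.ext_iff] using Finset.ne_of_mem_erase hu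
      rw [brm_adj] at hadj
      rcases hadj.2 with ⟨_, h⟩ | ⟨_, h⟩ | ⟨h, _⟩ | ⟨h, _⟩ <;> omega
    rw [hempty, Set.ncard_empty]
    omega
  have := le_dissocNum _ hdis
  rwa [Finset.card_erase_of_mem (Finset.mem_univ _), Finset.card_univ, Fintype.card_fin] at this

lemma brm_step (n m : ℕ) (h : m + 2 ≤ n) (a b : Fin n)
    (ha : a ≠ (⟨m+1, by omega⟩ : Fin n)) (hb : b ≠ (⟨m+1, by omega⟩ : Fin n)) :
    ((brm n m).Adj a b ↔ (brm n (m+1)).Adj a b) := by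
  have ha' : (a:ℕ) ≠ m+1 := by simpa only [ne_eq, Fin.ext_iff] using ha
  have hb' : (b:ℕ) ≠ m+1 := by simpa only [ne_eq, Fin.ext_iff] using hb
  rw [brm_adj, brm_adj]
  constructor <;> rintro ⟨hne, hcl⟩ <;> exact ⟨hne, by omega⟩

lemma brm_path_adj {n : ℕ} (hn : 3 ≤ n) {a b : Fin n} (h : (brm n (n-1)).Adj a b) :
    ((b:ℕ) = (a:ℕ)+1 ∨ (a:ℕ) = (b:ℕ)+1) := by
  rw [brm_adj] at h
  have ha := a.2
  have hb := b.2
  rcases h.2 with ⟨h1, _⟩ | ⟨h1, _⟩ | ⟨_, h1⟩ | ⟨_, h1⟩ <;> omega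

lemma brm_path_dissoc_le (n : ℕ) (hn : 3 ≤ n) :
    dissocNum (brm n (n-1)) ≤ (2*n+2)/3 := by
  apply dissocNum_le
  intro S hS
  classical
  have hcard : S.card = ∑ t ∈ Finset.range ((n+2)/3),
      (S.filter (fun (v : Fin n) => (v:ℕ)/3 = t)).card := by
    apply Finset.card_eq_sum_card_fiberwise
    intro v hv
    simp only [Finset.mem_coe, Finset.mem_range]
    have := v.2
    omega
  have hfull : ∀ t, 3*t+2 < n → (S.filter (fun (v : Fin n) => (v:ℕ)/3 = t)).card ≤ 2 := by
    intro t ht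
    by_contra hgt
    push_neg at hgt
    set a0 : Fin n := ⟨3*t, by omega⟩ with ha0def
    set a1 : Fin n := ⟨3*t+1, by omega⟩ with ha1def
    set a2 : Fin n := ⟨3*t+2, by omega⟩ with ha2def
    have hsub : S.filter (fun (v : Fin n) => (v:ℕ)/3 = t) ⊆ {a0, a1, a2} := by
      intro v hv
      simp only [Finset.mem_filter] at hv
      simp only [Finset.mem_insert, Finset.mem_singleton]
      have h2 := hv.2
      have hv3 : (v:ℕ) = 3*t ∨ (v:ℕ) = 3*t+1 ∨ (v:ℕ) = 3*t+2 := by omega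
      rcases hv3 with h|h|h
      · exact Or.inl (Fin.ext h)
      · exact Or.inr (Or.inl (Fin.ext h))
      · exact Or.inr (Or.inr (Fin.ext h))
    have hcard3 : ({a0, a1, a2} : Finset (Fin n)).card ≤ 3 :=
      le_trans (Finset.card_insert_le _ _)
        (by have := Finset.card_insert_le a1 ({a2} : Finset (Fin n)); simp only [Finset.card_singleton] at this; omega)
    have heq : S.filter (fun (v : Fin n) => (v:ℕ)/3 = t) = {a0, a1, a2} :=
      Finset.eq_of_subset_of_card_le hsub (by omega)
    have hmem : ∀ x ∈ ({a0, a1, a2} : Finset (Fin n)), x ∈ S := by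
      intro x hx
      rw [← heq] at hx
      exact (Finset.mem_filter.1 hx).1
    have ha0S : a0 ∈ S := hmem a0 (by simp)
    have ha1S : a1 ∈ S := hmem a1 (by simp)
    have ha2S : a2 ∈ S := hmem a2 (by simp)
    have hadj01 : (brm n (n-1)).Adj a1 a0 := by
      rw [brm_adj]
      refine ⟨by simp only [ne_eq, Fin.ext_iff, ha0def, ha1def]; omega,
        Or.inr (Or.inl ⟨show 3*t+1 = 3*t+1 from rfl, show 3*t < n-1 by omega⟩)⟩
    have hadj12 : (brm n (n-1)).Adj a1 a2 := by
      rw [brm_adj]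
      refine ⟨by simp only [ne_eq, Fin.ext_iff, ha1def, ha2def]; omega,
        Or.inl ⟨show 3*t+2 = 3*t+1+1 from rfl, show 3*t+1 < n-1 by omega⟩⟩
    have hpairsub : ({a0, a2} : Set (Fin n)) ⊆ {u | u ∈ S ∧ (brm n (n-1)).Adj a1 u} := by
      intro y hy
      rcases hy with rfl | hy
      · exact ⟨ha0S, hadj01⟩
      · rw [Set.mem_singleton_iff] at hy
        subst hy
        exact ⟨ha2S, hadj12⟩
    have hle := Set.ncard_le_ncard hpairsub (Set.toFinite _)
    rw [Set.ncard_pair (by simp only [ne_eq, Fin.ext_iff, ha0def, ha2def]; omega)] at hle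
    have := hS a1 ha1S
    omega
  have hpart : ∀ t, (S.filter (fun (v : Fin n) => (v:ℕ)/3 = t)).card ≤ n - 3*t := by
    intro t
    have := Finset.card_le_card_of_injOn (fun (v : Fin n) => (v:ℕ) - 3*t)
      (s := S.filter (fun (v : Fin n) => (v:ℕ)/3 = t)) (t := Finset.range (n - 3*t))
      (by
        intro v hv
        simp only [Finset.mem_coe, Finset.mem_filter] at hv
        simp only [Finset.mem_coe, Finset.mem_range]
        have := v.2
        omega)
      (by
        intro v hv w hw hvw
        simp only [Finset.mem_coe, Finset.mem_filter] at hv hw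
        have hv2 := hv.2
        have hw2 := hw.2
        apply Fin.ext
        simp only at hvw
        omega)
    simpa using this
  rw [hcard]
  set q := n / 3 with hq
  have h3 : n % 3 = 0 ∨ n % 3 = 1 ∨ n % 3 = 2 := by omega
  rcases h3 with hr | hr | hr
  · have hrange : (n+2)/3 = q := by omega
    rw [hrange]
    calc ∑ t ∈ Finset.range q, (S.filter (fun (v : Fin n) => (v:ℕ)/3 = t)).card
        ≤ ∑ t ∈ Finset.range q, 2 := by
          apply Finset.sum_le_sum
          intro t ht
          simp only [Finset.mem_range] at ht
          exact hfull t (by omega)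
      _ = 2 * q := by simp [Finset.sum_const, Nat.mul_comm]
      _ ≤ (2*n+2)/3 := by omega
  all_goals {
    have hrange : (n+2)/3 = q + 1 := by omega
    rw [hrange, Finset.sum_range_succ]
    have h1 : ∑ t ∈ Finset.range q, (S.filter (fun (v : Fin n) => (v:ℕ)/3 = t)).card
        ≤ 2 * q := by
      calc ∑ t ∈ Finset.range q, (S.filter (fun (v : Fin n) => (v:ℕ)/3 = t)).card
          ≤ ∑ t ∈ Finset.range q, 2 := by
            apply Finset.sum_le_sum
            intro t ht
            simp only [Finset.mem_range] at ht
            exact hfull t (by omega)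
        _ = 2 * q := by simp [Finset.sum_const, Nat.mul_comm]
    have h2 := hpart q
    omega
  }

lemma brm_f_step (n : ℕ) (hn : 3 ≤ n) (k : ℕ) :
    dissocNum (brm n (min (k+1) (n-1))) ≤ dissocNum (brm n (min k (n-1))) + 1 ∧
    dissocNum (brm n (min k (n-1))) ≤ dissocNum (brm n (min (k+1) (n-1))) + 1 := by
  by_cases hk : k < n - 1
  · have h1 : min k (n-1) = k := by omega
    have h2 : min (k+1) (n-1) = k+1 := by omega
    rw [h1, h2]
    have hm2 : k + 2 ≤ n := by omega
    constructor
    · exact dissocNum_le_succ _ _ (⟨k+1, by omega⟩ : Fin n)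
        (fun a b ha hb => (brm_step n k hm2 a b ha hb).symm)
    · exact dissocNum_le_succ _ _ (⟨k+1, by omega⟩ : Fin n)
        (fun a b ha hb => brm_step n k hm2 a b ha hb)
  · have heq : min k (n-1) = min (k+1) (n-1) := by omega
    rw [heq]
    omega

lemma brm_edges (n m : ℕ) (hn : 1 ≤ n) : Nat.card (brm n m).edgeSet ≤ n - 1 := by
  classical
  have key : ∀ a b : Fin n, (brm n m).Adj a b →
      (min (a:ℕ) (b:ℕ)) = (if max (a:ℕ) (b:ℕ) ≤ m then max (a:ℕ) (b:ℕ) - 1 else 0) := by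
    intro a b h
    have hne : (a:ℕ) ≠ (b:ℕ) := fun hv => h.ne (Fin.ext hv)
    rw [brm_adj] at h
    rcases h.2 with ⟨h1, h2⟩ | ⟨h1, h2⟩ | ⟨h1, h2⟩ | ⟨h1, h2⟩ <;> split_ifs <;> omega
  set f : Sym2 (Fin n) → ℕ :=
    Sym2.lift ⟨fun a b => max (a:ℕ) (b:ℕ), fun a b => max_comm _ _⟩ with hfdef
  have hinj : Set.InjOn f (brm n m).edgeSet := by
    rintro e1 he1 e2 he2 hfe
    obtain ⟨⟨a, b⟩, rfl⟩ := e1.exists_rep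
    obtain ⟨⟨c, d⟩, rfl⟩ := e2.exists_rep
    rw [SimpleGraph.mem_edgeSet] at he1 he2
    have hf1 : f s(a, b) = max (a:ℕ) (b:ℕ) := rfl
    have hf2 : f s(c, d) = max (c:ℕ) (d:ℕ) := rfl
    rw [hf1, hf2] at hfe
    have h1 := key a b he1
    have h2 := key c d he2
    have hmin : min (a:ℕ) (b:ℕ) = min (c:ℕ) (d:ℕ) := by
      rw [h1, h2, hfe]
    have hcase : ((a:ℕ) = (c:ℕ) ∧ (b:ℕ) = (d:ℕ)) ∨ ((a:ℕ) = (d:ℕ) ∧ (b:ℕ) = (c:ℕ)) := by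
      omega
    rw [Sym2.eq_iff]
    rcases hcase with ⟨hx, hy⟩ | ⟨hx, hy⟩
    · exact Or.inl ⟨Fin.ext hx, Fin.ext hy⟩
    · exact Or.inr ⟨Fin.ext hx, Fin.ext hy⟩
  have hsub : f '' (brm n m).edgeSet ⊆ ↑(Finset.Icc 1 (n-1)) := by
    rintro x ⟨e, he, rfl⟩
    obtain ⟨⟨a, b⟩, rfl⟩ := e.exists_rep
    rw [SimpleGraph.mem_edgeSet] at he
    have hne : (a:ℕ) ≠ (b:ℕ) := fun hv => he.ne (Fin.ext hv)
    have ha := a.2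
    have hb := b.2
    simp only [Finset.coe_Icc, Set.mem_Icc]
    constructor
    · show 1 ≤ max (a:ℕ) (b:ℕ); omega
    · show max (a:ℕ) (b:ℕ) ≤ n - 1; omega
  calc Nat.card (brm n m).edgeSet = ((brm n m).edgeSet).ncard := Nat.card_coe_set_eq _
    _ = (f '' (brm n m).edgeSet).ncard := (Set.ncard_image_of_injOn hinj).symm
    _ ≤ (↑(Finset.Icc 1 (n-1)) : Set ℕ).ncard := Set.ncard_le_ncard hsub (Set.toFinite _)
    _ = (Finset.Icc 1 (n-1)).card := Set.ncard_coe_finset _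
    _ ≤ n - 1 := by rw [Nat.card_Icc]; omega

lemma reach_eq_or_adj {V : Type*} (G : SimpleGraph V)
    (hdeg : ∀ v : V, ({u | G.Adj v u}).ncard ≤ 1) (hfin : ∀ v : V, ({u | G.Adj v u}).Finite) :
    ∀ u v : V, G.Reachable u v → u = v ∨ G.Adj u v := by
  intro u v hr
  obtain ⟨w⟩ := hr
  induction w with
  | nil => exact Or.inl rfl
  | @cons u x v h p ih =>
    rcases ih with rfl | hadj
    · exact Or.inr h
    · by_cases huv : u = v
      · exact Or.inl huv
      · exfalso
        have hsub : ({u, v} : Set V) ⊆ {y | G.Adj x y} := by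
          intro y hy
          rcases hy with rfl | hy
          · exact h.symm
          · rw [Set.mem_singleton_iff] at hy
            subst hy
            exact hadj
        have hle := Set.ncard_le_ncard hsub (hfin x)
        rw [Set.ncard_pair huv] at hle
        have := hdeg x
        omega

lemma dissocNum_le_of_connected {n : ℕ} (hn : 3 ≤ n) (G : SimpleGraph (Fin n))
    (hc : G.Connected) : dissocNum G ≤ n - 1 := by
  apply dissocNum_le
  intro S hS
  by_contra hlt
  push_neg at hlt
  have hcard : n ≤ S.card := by omega
  have hSuniv : S = Finset.univ := by
    apply Finset.eq_univ_of_card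
    have := S.card_le_univ
    simp only [Finset.card_univ, Fintype.card_fin] at *
    omega
  have hdeg : ∀ v : Fin n, ({u | G.Adj v u}).ncard ≤ 1 := by
    intro v
    have := hS v (by simp [hSuniv])
    simpa [hSuniv] using this
  have hreach := reach_eq_or_adj G hdeg (fun v => Set.toFinite _)
  set x0 : Fin n := ⟨0, by omega⟩
  set x1 : Fin n := ⟨1, by omega⟩
  set x2 : Fin n := ⟨2, by omega⟩
  have h01 : G.Adj x0 x1 := by
    rcases hreach x0 x1 (hc.preconnected x0 x1) with heq | hadj
    · exact absurd heq (by simp [x0, x1, Fin.ext_iff])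
    · exact hadj
  have h02 : G.Adj x0 x2 := by
    rcases hreach x0 x2 (hc.preconnected x0 x2) with heq | hadj
    · exact absurd heq (by simp [x0, x2, Fin.ext_iff])
    · exact hadj
  have hsub : ({x1, x2} : Set (Fin n)) ⊆ {u | G.Adj x0 u} := by
    intro y hy
    rcases hy with rfl | hy
    · exact h01
    · rw [Set.mem_singleton_iff] at hy
      subst hy
      exact h02
  have hle := Set.ncard_le_ncard hsub (Set.toFinite _)
  rw [Set.ncard_pair (by simp [x1, x2, Fin.ext_iff])] at hle
  have := hdeg x0
  omega

lemma delete_edge_connected {V : Type*} (G : SimpleGraph V) {u v : V} (hc : G.Connected)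
    (hr : (G \ fromEdgeSet {s(u,v)}).Reachable u v) :
    (G \ fromEdgeSet {s(u,v)}).Connected := by
  haveI : Nonempty V := hc.nonempty
  have key : ∀ (a b : V), G.Walk a b → (G \ fromEdgeSet {s(u,v)}).Reachable a b := by
    intro a b w
    induction w with
    | nil => exact Reachable.refl _
    | @cons a c b h p ih =>
      refine Reachable.trans ?_ ih
      by_cases he : s(a,c) = s(u,v)
      · rw [Sym2.eq_iff] at he
        rcases he with ⟨rfl, rfl⟩ | ⟨rfl, rfl⟩
        · exact hr
        · exact hr.symm
      · refine SimpleGraph.Adj.reachable ?_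
        rw [SimpleGraph.sdiff_adj]
        refine ⟨h, ?_⟩
        rw [SimpleGraph.fromEdgeSet_adj]
        rintro ⟨hmem, -⟩
        exact he (by simpa using hmem)
  constructor
  intro a b
  exact (hc.preconnected a b).elim (key a b)

lemma exists_delete {n : ℕ} (G : SimpleGraph (Fin n)) (hc : G.Connected)
    (hnac : ¬ G.IsAcyclic) :
    ∃ G' : SimpleGraph (Fin n), G'.Connected ∧
      Nat.card G'.edgeSet + 1 = Nat.card G.edgeSet := by
  rw [isAcyclic_iff_forall_edge_isBridge] at hnac
  push_neg at hnac
  obtain ⟨e, he, hbr⟩ := hnac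
  revert he hbr
  induction e using Sym2.ind with
  | _ u v =>
    intro he hbr
    have hadj : G.Adj u v := he
    rw [SimpleGraph.isBridge_iff] at hbr
    push_neg at hbr
    have hreach : (G \ fromEdgeSet {s(u,v)}).Reachable u v := hbr
    refine ⟨G \ fromEdgeSet {s(u,v)}, delete_edge_connected G hc hreach, ?_⟩
    have hE : (G \ fromEdgeSet {s(u,v)}).edgeSet = G.edgeSet \ {s(u,v)} := by
      rw [SimpleGraph.edgeSet_sdiff, SimpleGraph.edgeSet_fromEdgeSet,
        SimpleGraph.edgeSet_sdiff_sdiff_isDiag]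
    rw [Nat.card_coe_set_eq, Nat.card_coe_set_eq, hE,
      Set.ncard_diff_singleton_of_mem he]
    have hpos : 0 < (G.edgeSet).ncard := by
      rw [Set.ncard_pos (Set.toFinite _)]
      exact ⟨_, he⟩
    omega

lemma exists_adj_of_reachable_ne {V : Type*} {G : SimpleGraph V} {a b : V}
    (h : G.Reachable a b) (hne : a ≠ b) : ∃ x y, G.Adj x y := by
  obtain ⟨w⟩ := h
  cases w with
  | nil => exact absurd rfl hne
  | cons h p => exact ⟨_, _, h⟩

lemma conn_edges {n : ℕ} : ∀ (k : ℕ) (G : SimpleGraph (Fin n)),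
    Nat.card G.edgeSet ≤ k → G.Connected → n ≤ Nat.card G.edgeSet + 1 := by
  intro k
  induction k with
  | zero =>
    intro G hk hc
    by_contra hlt
    push_neg at hlt
    have h2 : 2 ≤ n := by omega
    have hne : (⟨0, by omega⟩ : Fin n) ≠ ⟨1, by omega⟩ := by
      simp [Fin.ext_iff]
    obtain ⟨x, y, hxy⟩ :=
      exists_adj_of_reachable_ne (hc.preconnected ⟨0, by omega⟩ ⟨1, by omega⟩) hne
    have hpos : 0 < Nat.card G.edgeSet := by
      rw [Nat.card_coe_set_eq, Set.ncard_pos (Set.toFinite _)]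
      exact ⟨s(x,y), hxy⟩
    omega
  | succ k ih =>
    intro G hk hc
    by_cases hac : G.IsAcyclic
    · classical
      haveI : Fintype G.edgeSet := Fintype.ofFinite _
      have htree : G.IsTree := ⟨hc, hac⟩
      have hcard := htree.card_edgeFinset
      rw [SimpleGraph.edgeFinset_card] at hcard
      rw [Nat.card_eq_fintype_card]
      simp only [Fintype.card_fin] at hcard
      omega
    · obtain ⟨G', hc', hcard⟩ := exists_delete G hc hac
      have := ih G' (by omega) hc'
      omega

lemma acyclic_of_card_le2 {V : Type*} [Fintype V] (h : Fintype.card V ≤ 2)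
    (G : SimpleGraph V) : G.IsAcyclic := by
  intro v c hc
  have h3 := hc.three_le_length
  have hnodup := hc.support_nodup
  classical
  have hlen := List.Nodup.length_le_card hnodup
  have hsl : c.support.length = c.length + 1 := SimpleGraph.Walk.length_support c
  have : c.support.tail.length = c.length := by
    rw [List.length_tail, hsl]
    omega
  omega

theorem stmt7 (n τ : ℕ) (hτ : ⌈(2 * n : ℚ) / 3⌉₊ ≤ τ) (G : SimpleGraph (Fin n))
    (hc : G.Connected) (hd : dissocNum G = τ)
    (hmin : ∀ H : SimpleGraph (Fin n), H.Connected → dissocNum H = τ →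
      Nat.card G.edgeSet ≤ Nat.card H.edgeSet) :
    G.IsTree := by
  rcases Nat.lt_or_ge n 3 with hn2 | hn
  · rcases Nat.eq_zero_or_pos n with rfl | hnpos
    · obtain ⟨v⟩ := hc.nonempty
      exact v.elim0
    · exact ⟨hc, acyclic_of_card_le2 (by simp only [Fintype.card_fin]; omega) G⟩
  · have hτ2 : (2*n+2)/3 ≤ τ := by
      have h1 : ((2*n : ℕ) : ℚ) / 3 ≤ (⌈(2 * n : ℚ) / 3⌉₊ : ℚ) := by
        push_cast
        exact Nat.le_ceil _
      have h2 : ((2*n : ℕ) : ℚ) ≤ 3 * (⌈(2 * n : ℚ) / 3⌉₊ : ℚ) := by linarith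
      have h3 : (2*n : ℕ) ≤ 3 * ⌈(2 * n : ℚ) / 3⌉₊ := by exact_mod_cast h2
      omega
    have hτn : τ ≤ n - 1 := hd ▸ dissocNum_le_of_connected hn G hc
    obtain ⟨k, hk⟩ := nat_ivt (fun k => dissocNum (brm n (min k (n-1)))) τ
      (brm_f_step n hn) (n-1)
      (by
        simp only [Nat.zero_min]
        exact le_trans (by omega) (brm_star_dissoc n (by omega)))
      (by
        simp only [min_self]
        exact le_trans (brm_path_dissoc_le n hn) hτ2)
    have hconn := brm_connected n (min k (n-1)) (by omega)
    have hedge := brm_edges n (min k (n-1)) (by omega)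
    have hG := hmin _ hconn hk
    refine ⟨hc, ?_⟩
    by_contra hnac
    obtain ⟨G', hc', hcard⟩ := exists_delete G hc hnac
    have hb := conn_edges (Nat.card G'.edgeSet) G' le_rfl hc'
    omega
end

section
/- For every integer $k \ge 2$ and every $n$, the maximum number of edges in an $n$-vertex graph with no subgraph isomorphic to $L_{2k+1}$ satisfies the recursion $\mathrm{ex}(n, L_{2k+1}) = \binom{2k}{2} + (2k-2)(n - 2k) + \mathrm{ex}(n - 2k, L_{2k+1})$ for $n > 2k$, and $\mathrm{ex}(n, L_{2k+1}) = \binom{n}{2}$ for $n \le 2k$. -/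
open SimpleGraph Finset

/-- The Turán number: the maximum number of edges of an `F`-free graph on `n` vertices. -/
noncomputable def exNum (n : ℕ) {α : Type*} (F : SimpleGraph α) : ℕ :=
  sSup {m | ∃ G : SimpleGraph (Fin n), ¬ containsCopy F G ∧ Nat.card G.edgeSet = m}


def gg (k n : ℕ) : ℕ := 2 * ∑ j ∈ Finset.Icc 1 (n / (2*k)), (n - 2*k*j)

lemma gg_of_le {k n : ℕ} (hk : 1 ≤ k) (h : n ≤ 2*k) : gg k n = 0 := by
  unfold gg
  rw [Finset.sum_eq_zero, Nat.mul_zero]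
  intro j hj
  simp only [Finset.mem_Icc] at hj
  have h2 : 2*k*1 ≤ 2*k*j := Nat.mul_le_mul_left _ hj.1
  omega

lemma gg_rec {k n : ℕ} (hk : 1 ≤ k) (h : 2*k < n) :
    gg k n = 2*(n-2*k) + gg k (n-2*k) := by
  have hd : 0 < 2*k := by omega
  have hq1 : 1 ≤ n / (2*k) := (Nat.one_le_div_iff hd).2 (by omega)
  have hsub : (n - 2*k) / (2*k) = n / (2*k) - 1 := by
    have hmod := Nat.div_add_mod n (2*k)
    have hlt := Nat.mod_lt n hd
    have e1 : 2*k*(n/(2*k)) = 2*k*(n/(2*k) - 1) + 2*k := by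
      have h2 : n/(2*k) - 1 + 1 = n/(2*k) := by omega
      calc 2*k*(n/(2*k)) = 2*k*((n/(2*k) - 1) + 1) := by rw [h2]
        _ = 2*k*(n/(2*k)-1) + 2*k := by ring
    have hrw : n - 2*k = 2*k*(n/(2*k) - 1) + n % (2*k) := by omega
    rw [hrw, Nat.mul_add_div hd, Nat.div_eq_of_lt hlt, Nat.add_zero]
  unfold gg
  rw [hsub]
  have hins : Finset.Icc 1 (n/(2*k)) = insert 1 ((Finset.Icc 1 (n/(2*k) - 1)).map
      ⟨(· + 1), add_left_injective 1⟩) := by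
    generalize n/(2*k) = q at hq1 ⊢
    ext x
    simp only [Finset.mem_insert, Finset.mem_map, Finset.mem_Icc, Function.Embedding.coeFn_mk]
    constructor
    · rintro ⟨h1, h2⟩
      rcases Nat.eq_or_lt_of_le h1 with h3 | h3
      · exact Or.inl h3.symm
      · exact Or.inr ⟨x - 1, by omega, by omega⟩
    · rintro (rfl | ⟨a, ⟨ha1, ha2⟩, rfl⟩) <;> omega
  rw [hins, Finset.sum_insert (by simp), Finset.sum_map]
  simp only [Function.Embedding.coeFn_mk]
  have hterm : ∀ j, n - 2*k*(j+1) = (n - 2*k) - 2*k*j := by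
    intro j
    have : 2*k*(j+1) = 2*k*j + 2*k := by ring
    omega
  rw [Nat.mul_add]
  congr 1
  · have : 2*k*1 = 2*k := by ring
    rw [this]
  · congr 1
    exact Finset.sum_congr rfl (fun j _ => hterm j)

lemma gg_mono {k m n : ℕ} (h : m ≤ n) : gg k m ≤ gg k n := by
  unfold gg
  apply Nat.mul_le_mul_left
  calc ∑ j ∈ Finset.Icc 1 (m / (2*k)), (m - 2*k*j)
      ≤ ∑ j ∈ Finset.Icc 1 (m / (2*k)), (n - 2*k*j) :=
        Finset.sum_le_sum (fun j _ => Nat.sub_le_sub_right h _)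
    _ ≤ ∑ j ∈ Finset.Icc 1 (n / (2*k)), (n - 2*k*j) := by
        apply Finset.sum_le_sum_of_subset
        apply Finset.Icc_subset_Icc_right
        exact Nat.div_le_div_right h

lemma two_mul_choose_two (n : ℕ) : 2 * n.choose 2 = n * (n-1) := by
  induction n with
  | zero => simp
  | succ n ih =>
    rw [Nat.choose_succ_succ, Nat.choose_one_right]
    have h0 : Nat.succ 1 = 2 := rfl
    rw [h0]
    have h2 : (n+1) * ((n+1)-1) = n*(n-1) + 2*n := by
      rcases n with _ | m
      · simp
      · simp only [Nat.add_sub_cancel]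
        ring
    omega

lemma choose_two_add (a b : ℕ) : (a+b).choose 2 = a.choose 2 + a*b + b.choose 2 := by
  induction b with
  | zero => simp
  | succ b ih =>
    have h1 : a + (b+1) = (a+b) + 1 := by ring
    have e1 : (a+b+1).choose 2 = (a+b).choose 1 + (a+b).choose 2 := Nat.choose_succ_succ _ 1
    have e2 : (b+1).choose 2 = b.choose 1 + b.choose 2 := Nat.choose_succ_succ _ 1
    have h2 : a * (b+1) = a*b + a := by ring
    rw [h1, e1, e2, ih, Nat.choose_one_right, Nat.choose_one_right]
    omega

lemma sum_div_identity (m : ℕ) (hm : 1 ≤ m) :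
    ∀ n : ℕ, ∑ w ∈ Finset.range n, w / m = ∑ j ∈ Finset.Icc 1 (n / m), (n - m*j) := by
  intro n
  induction n with
  | zero => simp
  | succ n ih =>
    rw [Finset.sum_range_succ, ih, Nat.succ_div]
    have hmq : m * (n/m) ≤ n := Nat.mul_div_le n m
    have hstep : ∀ j ∈ Finset.Icc 1 (n/m), (n+1) - m*j = (n - m*j) + 1 := by
      intro j hj
      simp only [Finset.mem_Icc] at hj
      have h3 : m*j ≤ m*(n/m) := Nat.mul_le_mul_left m hj.2
      omega
    by_cases hdvd : m ∣ n + 1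
    · simp only [hdvd, if_true]
      rw [Finset.sum_Icc_succ_top (Nat.le_add_left 1 (n/m))]
      have hlast : (n+1) - m*(n/m + 1) = 0 := by
        have h1 : m * ((n+1)/m) = n+1 := Nat.mul_div_cancel' hdvd
        have h2 : (n+1)/m = n/m + 1 := by rw [Nat.succ_div, if_pos hdvd]
        rw [← h2]
        omega
      rw [hlast, Nat.add_zero]
      rw [Finset.sum_congr rfl hstep, Finset.sum_add_distrib]
      simp [Nat.card_Icc]
    · simp only [hdvd, if_false, Nat.add_zero]
      rw [Finset.sum_congr rfl hstep, Finset.sum_add_distrib]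
      simp [Nat.card_Icc]

lemma cocktail_adj {d : ℕ} (a b : Fin d) :
    (cocktail d).Adj a b ↔ a ≠ b ∧ (a : ℕ)/2 ≠ (b : ℕ)/2 := by
  unfold cocktail
  rw [SimpleGraph.fromRel_adj]
  constructor
  · rintro ⟨h1, h2 | h2⟩
    · exact ⟨h1, h2⟩
    · exact ⟨h1, Ne.symm h2⟩
  · rintro ⟨h1, h2⟩
    exact ⟨h1, Or.inl h2⟩

lemma dissoc_set_eq_filter {V : Type*} [DecidableEq V] (G : SimpleGraph V)
    [DecidableRel G.Adj] (S : Finset V) (v : V) :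
    {u | u ∈ S ∧ G.Adj v u} = ↑(S.filter (fun u => G.Adj v u)) := by
  ext u; simp

lemma isDissocSet_iff {V : Type*} [DecidableEq V] (G : SimpleGraph V)
    [DecidableRel G.Adj] (S : Finset V) :
    IsDissocSet G S ↔ ∀ v ∈ S, (S.filter (fun u => G.Adj v u)).card ≤ 1 := by
  unfold IsDissocSet
  refine forall₂_congr (fun v _ => ?_)
  rw [dissoc_set_eq_filter, Set.ncard_coe_finset]

lemma isDissocSet_subset {V : Type*} (G : SimpleGraph V) {S T : Finset V}
    (h : IsDissocSet G T) (hST : S ⊆ T) : IsDissocSet G S := by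
  intro v hv
  have hfin : ({u | u ∈ T ∧ G.Adj v u} : Set V).Finite :=
    T.finite_toSet.subset (fun u hu => hu.1)
  have hsub : {u | u ∈ S ∧ G.Adj v u} ⊆ {u | u ∈ T ∧ G.Adj v u} :=
    fun u hu => ⟨hST hu.1, hu.2⟩
  exact le_trans (Set.ncard_le_ncard hsub hfin) (h v (hST hv))

lemma dissoc_of_copy {k n : ℕ} (G : SimpleGraph (Fin n))
    (h : containsCopy (cocktail (2*k+1)) G) :
    ∃ S : Finset (Fin n), S.card = 2*k+1 ∧ IsDissocSet Gᶜ S := by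
  classical
  obtain ⟨f, hf⟩ := h
  refine ⟨Finset.univ.image f, ?_, ?_⟩
  · rw [Finset.card_image_of_injective _ f.injective, Finset.card_univ, Fintype.card_fin]
  · rw [isDissocSet_iff]
    intro v hv
    obtain ⟨a, _, rfl⟩ := Finset.mem_image.1 hv
    rw [Finset.card_le_one]
    have key : ∀ u ∈ (Finset.univ.image f).filter (fun u => Gᶜ.Adj (f a) u),
        ∃ b : Fin (2*k+1), u = f b ∧ b ≠ a ∧ (b : ℕ)/2 = (a : ℕ)/2 := by
      intro u hu
      rw [Finset.mem_filter] at hu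
      obtain ⟨b, _, rfl⟩ := Finset.mem_image.1 hu.1
      have hadj := hu.2
      rw [SimpleGraph.compl_adj] at hadj
      have hba : b ≠ a := fun hba0 => hadj.1 (by rw [hba0])
      have hnc : ¬ (cocktail (2*k+1)).Adj a b := fun hc => hadj.2 (hf a b hc)
      rw [cocktail_adj] at hnc
      push_neg at hnc
      exact ⟨b, rfl, hba, (hnc (Ne.symm hba)).symm⟩
    intro u1 hu1 u2 hu2
    obtain ⟨b1, rfl, hb1, he1⟩ := key u1 hu1
    obtain ⟨b2, rfl, hb2, he2⟩ := key u2 hu2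
    have hb12 : b1 = b2 := by
      have h1 := b1.isLt; have h2 := b2.isLt; have h3 := a.isLt
      have : (b1 : ℕ) = (b2 : ℕ) := by
        have e1 : (b1:ℕ) ≠ (a:ℕ) := fun hh => hb1 (Fin.ext hh)
        have e2 : (b2:ℕ) ≠ (a:ℕ) := fun hh => hb2 (Fin.ext hh)
        omega
      exact Fin.ext this
    rw [hb12]

lemma embed_aux {V : Type*} [DecidableEq V] (H : SimpleGraph V) :
    ∀ (m : ℕ) (S : Finset V), S.card = 2*m+1 →
      (∀ v ∈ S, ∀ u ∈ S, ∀ w ∈ S, H.Adj v u → H.Adj v w → u = w) →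
      ∃ f : Fin (2*m+1) → V, Function.Injective f ∧ (∀ a, f a ∈ S) ∧
        ∀ a b : Fin (2*m+1), H.Adj (f a) (f b) → (a : ℕ)/2 = (b : ℕ)/2 := by
  intro m
  induction m with
  | zero =>
    intro S hcard _
    obtain ⟨x, rfl⟩ := Finset.card_eq_one.1 hcard
    refine ⟨fun _ => x, fun a b _ => Fin.ext (by have := a.isLt; have := b.isLt; omega), fun _ => Finset.mem_singleton_self x,
      fun a b hab => absurd hab (H.irrefl)⟩
  | succ m ih =>
    intro S hcard hdiss
    by_cases hedge : ∃ x ∈ S, ∃ y ∈ S, H.Adj x y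
    · obtain ⟨x, hxS, y, hyS, hxy⟩ := hedge
      have hxny : x ≠ y := H.ne_of_adj hxy
      have hyex : y ∈ S.erase x := Finset.mem_erase.2 ⟨Ne.symm hxny, hyS⟩
      set S' := (S.erase x).erase y with hS'
      have hS'sub : S' ⊆ S := fun z hz =>
        Finset.erase_subset _ _ (Finset.erase_subset _ _ hz)
      have hxS' : x ∉ S' := by
        intro hx
        have := Finset.mem_of_mem_erase hx
        exact Finset.notMem_erase x S this
      have hyS' : y ∉ S' := Finset.notMem_erase y _
      have hcard' : S'.card = 2*m+1 := by
        rw [hS', Finset.card_erase_of_mem hyex, Finset.card_erase_of_mem hxS, hcard]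
        omega
      have hdiss' : ∀ v ∈ S', ∀ u ∈ S', ∀ w ∈ S', H.Adj v u → H.Adj v w → u = w :=
        fun v hv u hu w hw => hdiss v (hS'sub hv) u (hS'sub hu) w (hS'sub hw)
      obtain ⟨f', hinj', hmem', hadj'⟩ := ih S' hcard' hdiss'
      have hx_iso : ∀ z ∈ S', ¬ H.Adj x z := by
        intro z hz hadj
        have := hdiss x hxS y hyS z (hS'sub hz) hxy hadj
        exact hyS' (this ▸ hz)
      have hy_iso : ∀ z ∈ S', ¬ H.Adj y z := by
        intro z hz hadj
        have := hdiss y hyS x hxS z (hS'sub hz) hxy.symm hadj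
        exact hxS' (this ▸ hz)
      refine ⟨fun a => if (a:ℕ) = 0 then x else if (a:ℕ) = 1 then y
          else f' ⟨(a:ℕ) - 2, by have := a.isLt; omega⟩, ?_, ?_, ?_⟩
      · intro a b hab
        have ha2 := a.isLt; have hb2 := b.isLt
        apply Fin.ext
        beta_reduce at hab
        split_ifs at hab
        all_goals first
          | omega
          | (exact absurd hab hxny)
          | (exact absurd hab.symm hxny)
          | (exact absurd (by rw [hab]; exact hmem' _) hxS')
          | (exact absurd (by rw [← hab]; exact hmem' _) hxS')
          | (exact absurd (by rw [hab]; exact hmem' _) hyS')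
          | (exact absurd (by rw [← hab]; exact hmem' _) hyS')
          | (have h9 : ((a:ℕ) - 2) = ((b:ℕ) - 2) := congrArg Fin.val (hinj' hab); omega)
      · intro a
        beta_reduce
        split_ifs
        · exact hxS
        · exact hyS
        · exact hS'sub (hmem' _)
      · intro a b hab
        have ha2 := a.isLt; have hb2 := b.isLt
        beta_reduce at hab
        split_ifs at hab
        all_goals first
          | omega
          | (exact absurd hab (H.irrefl))
          | (exact absurd hab (hx_iso _ (hmem' _)))
          | (exact absurd hab (hy_iso _ (hmem' _)))
          | (exact absurd hab.symm (hx_iso _ (hmem' _)))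
          | (exact absurd hab.symm (hy_iso _ (hmem' _)))
          | (have h9 : ((a:ℕ) - 2)/2 = ((b:ℕ) - 2)/2 := hadj' _ _ hab; omega)
    · push_neg at hedge
      have e := (Finset.equivFinOfCardEq hcard).symm
      refine ⟨fun a => (e a : V), ?_, fun a => (e a).2, ?_⟩
      · intro a b hab
        exact e.injective (Subtype.ext hab)
      · intro a b hab
        exact absurd hab (hedge _ (e a).2 _ (e b).2)

lemma copy_of_dissoc {k n : ℕ} (G : SimpleGraph (Fin n)) (S : Finset (Fin n))
    (hcard : S.card = 2*k+1) (hdiss : IsDissocSet Gᶜ S) :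
    containsCopy (cocktail (2*k+1)) G := by
  classical
  have hdiss' : ∀ v ∈ S, ∀ u ∈ S, ∀ w ∈ S, Gᶜ.Adj v u → Gᶜ.Adj v w → u = w := by
    rw [isDissocSet_iff] at hdiss
    intro v hv u hu w hw hadju hadjw
    have h1 := Finset.card_le_one.1 (hdiss v hv)
    exact h1 u (Finset.mem_filter.2 ⟨hu, hadju⟩) w (Finset.mem_filter.2 ⟨hw, hadjw⟩)
  obtain ⟨f, hinj, hmem, hadj⟩ := embed_aux Gᶜ k S hcard hdiss'
  refine ⟨⟨f, hinj⟩, ?_⟩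
  intro a b hab
  rw [cocktail_adj] at hab
  simp only [Function.Embedding.coeFn_mk]
  by_contra hnadj
  have hne : f a ≠ f b := fun hh => hab.1 (hinj hh)
  have : Gᶜ.Adj (f a) (f b) := (SimpleGraph.compl_adj G (f a) (f b)).2 ⟨hne, hnadj⟩
  exact hab.2 (hadj a b this)

def exH (k n : ℕ) : SimpleGraph (Fin n) :=
  SimpleGraph.fromRel (fun v w => (v : ℕ) % k = (w : ℕ) % k ∧ (v : ℕ) / (2*k) ≠ (w : ℕ) / (2*k))

lemma exH_adj {k n : ℕ} (v w : Fin n) :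
    (exH k n).Adj v w ↔ v ≠ w ∧ (v : ℕ) % k = (w : ℕ) % k ∧ (v : ℕ) / (2*k) ≠ (w : ℕ) / (2*k) := by
  unfold exH
  rw [SimpleGraph.fromRel_adj]
  constructor
  · rintro ⟨h1, ⟨h2, h3⟩ | ⟨h2, h3⟩⟩
    · exact ⟨h1, h2, h3⟩
    · exact ⟨h1, h2.symm, Ne.symm h3⟩
  · rintro ⟨h1, h2, h3⟩
    exact ⟨h1, Or.inl ⟨h2, h3⟩⟩

lemma exH_no_dissoc {k n : ℕ} (hk : 1 ≤ k) (S : Finset (Fin n)) (hcard : S.card = 2*k+1) :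
    ¬ IsDissocSet (exH k n) S := by
  classical
  intro hdiss
  rw [isDissocSet_iff] at hdiss
  -- pigeonhole : some residue class mod k contains ≥ 3 elements of S
  have hmap : ∀ v ∈ S, (v : ℕ) % k ∈ Finset.range k :=
    fun v _ => Finset.mem_range.2 (Nat.mod_lt _ (by omega))
  have hpig : ∃ i ∈ Finset.range k, 2 < (S.filter (fun v : Fin n => (v : ℕ) % k = i)).card := by
    apply Finset.exists_lt_card_fiber_of_mul_lt_card_of_maps_to hmap
    rw [Finset.card_range, hcard]
    omega
  obtain ⟨i, _, hfib⟩ := hpig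
  rw [Finset.two_lt_card_iff] at hfib
  obtain ⟨a, b, c, ha, hb, hc, hab, hac, hbc⟩ := hfib
  rw [Finset.mem_filter] at ha hb hc
  -- key : a vertex of S adjacent to two distinct members of S contradicts dissociativity
  have key : ∀ x y z : Fin n, x ∈ S → y ∈ S → z ∈ S → y ≠ z →
      (x : ℕ) % k = (y : ℕ) % k → (x : ℕ) % k = (z : ℕ) % k →
      (x : ℕ) / (2*k) ≠ (y : ℕ) / (2*k) → (x : ℕ) / (2*k) ≠ (z : ℕ) / (2*k) → False := by
    intro x y z hx hy hz hyz hmy hmz hry hrz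
    have hxy : (exH k n).Adj x y := (exH_adj x y).2 ⟨fun he => hry (by rw [he]), hmy, hry⟩
    have hxz : (exH k n).Adj x z := (exH_adj x z).2 ⟨fun he => hrz (by rw [he]), hmz, hrz⟩
    have hsub : ({y, z} : Finset (Fin n)) ⊆ S.filter (fun u => (exH k n).Adj x u) := by
      intro u hu
      rw [Finset.mem_insert, Finset.mem_singleton] at hu
      rcases hu with rfl | rfl
      · exact Finset.mem_filter.2 ⟨hy, hxy⟩
      · exact Finset.mem_filter.2 ⟨hz, hxz⟩
    have h2 : 2 ≤ (S.filter (fun u => (exH k n).Adj x u)).card := by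
      have := Finset.card_le_card hsub
      rwa [Finset.card_pair hyz] at this
    have := hdiss x hx
    omega
  -- case analysis on the rows
  by_cases h1 : (a : ℕ)/(2*k) ≠ (b : ℕ)/(2*k) ∧ (a : ℕ)/(2*k) ≠ (c : ℕ)/(2*k)
  · exact key a b c ha.1 hb.1 hc.1 hbc (by omega) (by omega) h1.1 h1.2
  by_cases h2 : (b : ℕ)/(2*k) ≠ (a : ℕ)/(2*k) ∧ (b : ℕ)/(2*k) ≠ (c : ℕ)/(2*k)
  · exact key b a c hb.1 ha.1 hc.1 hac (by omega) (by omega) h2.1 h2.2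
  by_cases h3 : (c : ℕ)/(2*k) ≠ (a : ℕ)/(2*k) ∧ (c : ℕ)/(2*k) ≠ (b : ℕ)/(2*k)
  · exact key c a b hc.1 ha.1 hb.1 hab (by omega) (by omega) h3.1 h3.2
  -- otherwise all three rows are equal, contradiction : only 2 slots per (residue, row)
  push_neg at h1 h2 h3
  have e1 : (a : ℕ)/(2*k) = (b : ℕ)/(2*k) := by
    by_contra ne1
    have c1 := h1 ne1
    have c2 := h2 (Ne.symm ne1)
    exact ne1 (c1.trans c2.symm)
  have e2 : (a : ℕ)/(2*k) = (c : ℕ)/(2*k) := by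
    by_contra ne2
    have c3 := h3 (fun hh => ne2 hh.symm)
    exact ne2 (e1.trans c3.symm)
  have hrows : (a : ℕ)/(2*k) = (b : ℕ)/(2*k) ∧ (a : ℕ)/(2*k) = (c : ℕ)/(2*k) := ⟨e1, e2⟩
  have hv : ∀ v : Fin n, (v : ℕ) = k * ((v:ℕ)/k) + (v:ℕ) % k := fun v =>
    (Nat.div_add_mod _ _).symm
  have hsplit : ∀ v : Fin n, (v:ℕ)/k = 2*((v:ℕ)/(2*k)) + ((v:ℕ)/k) % 2 := by
    intro v
    have e1 : (v:ℕ)/k/2 = (v:ℕ)/(2*k) := by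
      rw [Nat.div_div_eq_div_mul, Nat.mul_comm]
    rw [← e1]
    omega
  have hdd : ((a:ℕ)/k) = ((b:ℕ)/k) ∨ ((a:ℕ)/k) = ((c:ℕ)/k) ∨ ((b:ℕ)/k) = ((c:ℕ)/k) := by
    have sa := hsplit a; have sb := hsplit b; have sc := hsplit c
    have m2a : ((a:ℕ)/k) % 2 < 2 := Nat.mod_lt _ (by omega)
    have m2b : ((b:ℕ)/k) % 2 < 2 := Nat.mod_lt _ (by omega)
    have m2c : ((c:ℕ)/k) % 2 < 2 := Nat.mod_lt _ (by omega)
    omega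
  have hfe : ∀ u v : Fin n, u ∈ S → v ∈ S → (u:ℕ)%k = i → (v:ℕ)%k = i →
      (u:ℕ)/k = (v:ℕ)/k → u = v := by
    intro u v _ _ hmu hmv he
    apply Fin.ext
    rw [hv u, hv v, hmu, hmv, he]
  rcases hdd with h | h | h
  · exact hab (hfe a b ha.1 hb.1 ha.2 hb.2 h)
  · exact hac (hfe a c ha.1 hc.1 ha.2 hc.2 h)
  · exact hbc (hfe b c hb.1 hc.1 hb.2 hc.2 h)

lemma exH_card_edges {k n : ℕ} (hk : 1 ≤ k) :
    Nat.card (exH k n).edgeSet = gg k n := by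
  classical
  rw [Nat.card_eq_fintype_card, ← SimpleGraph.edgeFinset_card]
  have h2e := SimpleGraph.two_mul_card_edgeFinset (G := exH k n)
  have hPP : (Finset.univ.filter fun ((x,y) : Fin n × Fin n) => (exH k n).Adj x y) =
      (Finset.univ.filter fun (p : Fin n × Fin n) => (exH k n).Adj p.1 p.2) := by
    apply Finset.filter_congr
    rintro ⟨x, y⟩ _
    exact Iff.rfl
  rw [hPP] at h2e
  have hPQ : (Finset.univ.filter fun (p : Fin n × Fin n) => (exH k n).Adj p.1 p.2).card =
      2 * (Finset.univ.filter
        fun (p : Fin n × Fin n) => (exH k n).Adj p.1 p.2 ∧ p.1 < p.2).card := by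
    rw [← Finset.card_filter_add_card_filter_not
      (s := Finset.univ.filter fun (p : Fin n × Fin n) => (exH k n).Adj p.1 p.2)
      (p := fun p => p.1 < p.2), Finset.filter_filter, Finset.filter_filter]
    have hswap : (Finset.univ.filter
          fun (p : Fin n × Fin n) => (exH k n).Adj p.1 p.2 ∧ ¬ p.1 < p.2).card =
        (Finset.univ.filter
          fun (p : Fin n × Fin n) => (exH k n).Adj p.1 p.2 ∧ p.1 < p.2).card := by
      refine Finset.card_nbij' Prod.swap Prod.swap ?_ ?_ ?_ ?_
      · rintro ⟨x, y⟩ hp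
        simp only [Finset.mem_coe, Finset.mem_filter, Finset.mem_univ, true_and] at hp ⊢
        obtain ⟨hadj, hlt⟩ := hp
        refine ⟨hadj.symm, ?_⟩
        have hne : (x : ℕ) ≠ (y : ℕ) := fun he => hadj.ne (Fin.ext he)
        rw [Fin.lt_def] at hlt ⊢
        simp only [Prod.fst_swap, Prod.snd_swap]
        omega
      · rintro ⟨x, y⟩ hp
        simp only [Finset.mem_coe, Finset.mem_filter, Finset.mem_univ, true_and] at hp ⊢
        obtain ⟨hadj, hlt⟩ := hp
        refine ⟨hadj.symm, ?_⟩
        rw [Fin.lt_def] at hlt ⊢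
        simp only [Prod.fst_swap, Prod.snd_swap]
        omega
      · intro p _; exact Prod.swap_swap p
      · intro p _; exact Prod.swap_swap p
    omega
  have hfib : (Finset.univ.filter
      fun (p : Fin n × Fin n) => (exH k n).Adj p.1 p.2 ∧ p.1 < p.2).card =
      ∑ w : Fin n, 2 * ((w : ℕ) / (2*k)) := by
    rw [Finset.card_eq_sum_card_fiberwise (f := fun p => p.2) (t := Finset.univ)
      (fun p _ => Finset.mem_univ _)]
    apply Finset.sum_congr rfl
    intro w _
    rw [← Finset.card_range (2*((w:ℕ)/(2*k)))]
    refine Finset.card_bij' (fun p _ => (p.1 : ℕ)/k)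
      (fun jj hjj => ((⟨(w:ℕ)%k + k*jj, by
        rw [Finset.mem_range] at hjj
        have hj1 : k*(jj+1) ≤ k*(2*((w:ℕ)/(2*k))) := Nat.mul_le_mul_left k hjj
        have hj2 : k*(jj+1) = k*jj + k := Nat.mul_succ k jj
        have hj3 : k*(2*((w:ℕ)/(2*k))) = (w:ℕ)/(2*k)*(2*k) := by ring
        have hj4 : (w:ℕ)/(2*k)*(2*k) ≤ (w:ℕ) := Nat.div_mul_le_self _ _
        have hj5 : (w:ℕ)%k < k := Nat.mod_lt _ (by omega)
        have hj6 : (w:ℕ) < n := w.isLt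
        omega⟩ : Fin n), w)) ?_ ?_ ?_ ?_
    · -- i maps into range
      rintro ⟨v, w'⟩ hp
      simp only [Finset.mem_filter, Finset.mem_univ, true_and] at hp
      obtain ⟨⟨hadj, hlt⟩, heq⟩ := hp
      rw [exH_adj] at hadj
      obtain ⟨hne, hmod, hrow⟩ := hadj
      rw [heq] at hmod hrow hlt
      rw [Finset.mem_range]
      show (v:ℕ)/k < 2*((w:ℕ)/(2*k))
      have hvd : (v : ℕ)/(2*k) ≤ (w : ℕ)/(2*k) :=
        Nat.div_le_div_right (le_of_lt (Fin.lt_def.1 hlt))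
      have hlt2 : (v : ℕ)/(2*k) < (w : ℕ)/(2*k) := lt_of_le_of_ne hvd hrow
      have hdd : (v:ℕ)/k/2 = (v:ℕ)/(2*k) := by
        rw [Nat.div_div_eq_div_mul, Nat.mul_comm]
      omega
    · -- j maps into fiber
      intro jj hjj
      rw [Finset.mem_range] at hjj
      have hj2 : k*(jj+1) = k*jj + k := Nat.mul_succ k jj
      have hj1 : k*(jj+1) ≤ k*(2*((w:ℕ)/(2*k))) := Nat.mul_le_mul_left k hjj
      have hj3 : k*(2*((w:ℕ)/(2*k))) = (w:ℕ)/(2*k)*(2*k) := by ring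
      have hj4 : (w:ℕ)/(2*k)*(2*k) ≤ (w:ℕ) := Nat.div_mul_le_self _ _
      have hj5 : (w:ℕ)%k < k := Nat.mod_lt _ (by omega)
      have hult : (w:ℕ)%k + k*jj < (w:ℕ) := by omega
      have humod : ((w:ℕ)%k + k*jj) % k = (w:ℕ)%k := by
        rw [Nat.add_mul_mod_self_left, Nat.mod_mod_of_dvd _ (dvd_refl k)]
      have hukey : ((w:ℕ)%k + k*jj) / k = jj := by
        rw [Nat.add_mul_div_left _ _ (by omega : 0 < k), Nat.div_eq_of_lt hj5]
        omega
      have hurow : ((w:ℕ)%k + k*jj) / (2*k) = jj / 2 := by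
        rw [show 2*k = k*2 by ring, ← Nat.div_div_eq_div_mul, hukey]
      have hwrow : jj / 2 < (w:ℕ)/(2*k) := by omega
      simp only [Finset.mem_filter, Finset.mem_univ, true_and]
      refine ⟨⟨?_, ?_⟩, trivial⟩
      · rw [exH_adj]
        refine ⟨?_, ?_, ?_⟩
        · intro he
          have : ((w:ℕ)%k + k*jj) = (w:ℕ) := congrArg Fin.val he
          omega
        · exact humod
        · rw [hurow]; omega
      · rw [Fin.lt_def]
        exact hult
    · -- left inverse
      rintro ⟨v, w'⟩ hp
      simp only [Finset.mem_filter, Finset.mem_univ, true_and] at hp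
      obtain ⟨⟨hadj, hlt⟩, heq⟩ := hp
      rw [exH_adj] at hadj
      obtain ⟨hne, hmod, hrow⟩ := hadj
      rw [heq] at hmod hrow
      have hval : (w:ℕ)%k + k*((v:ℕ)/k) = (v:ℕ) := by
        rw [← hmod, Nat.mod_add_div]
      refine Prod.ext (Fin.ext hval) ?_
      exact heq.symm
    · -- right inverse
      intro jj hjj
      rw [Finset.mem_range] at hjj
      have hj5 : (w:ℕ)%k < k := Nat.mod_lt _ (by omega)
      show ((w:ℕ)%k + k*jj)/k = jj
      rw [Nat.add_mul_div_left _ _ (by omega : 0 < k), Nat.div_eq_of_lt hj5]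
      omega
  have hsum : ∑ w : Fin n, 2 * ((w : ℕ) / (2*k)) = gg k n := by
    rw [← Finset.mul_sum]
    unfold gg
    congr 1
    rw [Fin.sum_univ_eq_sum_range (fun w => w / (2*k)) n]
    exact sum_div_identity (2*k) (by omega) n
  omega

lemma mul_pred_add (x : ℕ) : x*(x-1) + x = x*x := by
  cases x with
  | zero => simp
  | succ x' => simp only [Nat.add_sub_cancel]; ring

set_option maxHeartbeats 1000000 in
lemma master_le {k : ℕ} (hk : 2 ≤ k) :
    ∀ n : ℕ, ∀ G : SimpleGraph (Fin n), ¬ containsCopy (cocktail (2*k+1)) G →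
      Nat.card G.edgeSet + gg k n ≤ n.choose 2 := by
  intro n
  induction n using Nat.strong_induction_on with
  | _ n IH =>
  intro G hfree
  classical
  have hecard : Nat.card G.edgeSet = G.edgeFinset.card := by
    rw [Nat.card_eq_fintype_card, SimpleGraph.edgeFinset_card]
  have hele : G.edgeFinset.card ≤ n.choose 2 := by
    have := SimpleGraph.card_edgeFinset_le_card_choose_two (G := G)
    rwa [Fintype.card_fin] at this
  by_cases hn : n ≤ 2*k
  · rw [gg_of_le (by omega) hn, hecard, Nat.add_zero]
    exact hele
  push_neg at hn
  -- all dissociation sets of Gᶜ have size ≤ 2k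
  have hbound : ∀ S : Finset (Fin n), IsDissocSet Gᶜ S → S.card ≤ 2*k := by
    intro S hS
    by_contra hgt
    push_neg at hgt
    obtain ⟨T, hTS, hTcard⟩ := Finset.exists_subset_card_eq (show 2*k+1 ≤ S.card by omega)
    exact hfree (copy_of_dissoc G T hTcard (isDissocSet_subset _ hS hTS))
  -- choose a maximum dissociation set S of Gᶜ with fewest internal compl-edges
  set 𝒮 := Finset.univ.powerset.filter (fun S : Finset (Fin n) => IsDissocSet Gᶜ S) with h𝒮
  have hempty𝒮 : (∅ : Finset (Fin n)) ∈ 𝒮 := by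
    rw [h𝒮, Finset.mem_filter]
    exact ⟨Finset.mem_powerset.2 (Finset.empty_subset _), fun v hv => absurd hv (by simp)⟩
  obtain ⟨S₀, hS₀mem, hS₀max⟩ := Finset.exists_max_image 𝒮 (fun S => S.card) ⟨∅, hempty𝒮⟩
  set φ : Finset (Fin n) → ℕ :=
    fun S => ((S ×ˢ S).filter (fun p => Gᶜ.Adj p.1 p.2)).card with hφ
  obtain ⟨S, hSmem2, hSmin⟩ := Finset.exists_min_image
    (𝒮.filter (fun S => S.card = S₀.card)) φ ⟨S₀, by simp [Finset.mem_filter, hS₀mem]⟩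
  rw [Finset.mem_filter] at hSmem2
  obtain ⟨hSmem, hScard0⟩ := hSmem2
  have hSdiss : IsDissocSet Gᶜ S := by
    rw [h𝒮, Finset.mem_filter] at hSmem
    exact hSmem.2
  have hSdiss' := (isDissocSet_iff Gᶜ S).1 hSdiss
  have hSmax : ∀ T : Finset (Fin n), IsDissocSet Gᶜ T → T.card ≤ S.card := by
    intro T hT
    rw [hScard0]
    apply hS₀max
    rw [h𝒮, Finset.mem_filter]
    exact ⟨Finset.mem_powerset.2 (Finset.subset_univ _), hT⟩
  have hs2k : S.card ≤ 2*k := hbound S hSdiss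
  -- KEY LEMMA : every vertex outside S has ≥ 2 Gᶜ-neighbors in S
  have key : ∀ v : Fin n, v ∉ S → 2 ≤ (S.filter (fun u => Gᶜ.Adj v u)).card := by
    intro v hv
    by_contra hcon
    push_neg at hcon
    interval_cases hd : (S.filter (fun u => Gᶜ.Adj v u)).card
    · -- no neighbors : S ∪ {v} is a bigger dissociation set
      have hnone : ∀ u ∈ S, ¬ Gᶜ.Adj v u := by
        rw [← Finset.filter_eq_empty_iff]
        exact Finset.card_eq_zero.1 hd
      have hdiss2 : IsDissocSet Gᶜ (insert v S) := by
        rw [isDissocSet_iff]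
        intro x hx
        rcases Finset.mem_insert.1 hx with rfl | hxS
        · have : (insert x S).filter (fun u => Gᶜ.Adj x u) = ∅ := by
            rw [Finset.filter_eq_empty_iff]
            intro u hu
            rcases Finset.mem_insert.1 hu with rfl | huS
            · exact Gᶜ.irrefl
            · exact hnone u huS
          rw [this]
          simp
        · rw [Finset.filter_insert, if_neg (fun h => hnone x hxS h.symm)]
          exact hSdiss' x hxS
      have := hSmax _ hdiss2
      rw [Finset.card_insert_of_notMem hv] at this
      omega
    · -- exactly one neighbor u
      obtain ⟨u, hu⟩ := Finset.card_eq_one.1 hd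
      have huS : u ∈ S ∧ Gᶜ.Adj v u := by
        have : u ∈ S.filter (fun u => Gᶜ.Adj v u) := by rw [hu]; exact Finset.mem_singleton_self u
        exact Finset.mem_filter.1 this
      have huniq : ∀ w ∈ S, Gᶜ.Adj v w → w = u := by
        intro w hw hadj
        have : w ∈ S.filter (fun u => Gᶜ.Adj v u) := Finset.mem_filter.2 ⟨hw, hadj⟩
        rw [hu] at this
        exact Finset.mem_singleton.1 this
      have hvu : v ≠ u := Gᶜ.ne_of_adj huS.2
      rcases Nat.eq_zero_or_pos ((S.filter (fun w => Gᶜ.Adj u w)).card) with hu0 | hu1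
      · -- u has no neighbor in S : insert v S is dissociative, contradiction
        have hnoneu : ∀ w ∈ S, ¬ Gᶜ.Adj u w := by
          rw [← Finset.filter_eq_empty_iff]
          exact Finset.card_eq_zero.1 hu0
        have hdiss2 : IsDissocSet Gᶜ (insert v S) := by
          rw [isDissocSet_iff]
          intro x hx
          rcases Finset.mem_insert.1 hx with rfl | hxS
          · have : (insert x S).filter (fun w => Gᶜ.Adj x w) = {u} := by
              rw [Finset.filter_insert, if_neg Gᶜ.irrefl, hu]
            rw [this]
            simp
          · rw [Finset.filter_insert]
            by_cases hxv : Gᶜ.Adj x v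
            · have : x = u := huniq x hxS hxv.symm
              subst this
              rw [if_pos hxv]
              have : S.filter (fun w => Gᶜ.Adj x w) = ∅ := by
                rw [Finset.filter_eq_empty_iff]
                exact hnoneu
              rw [this]
              simp
            · rw [if_neg hxv]
              exact hSdiss' x hxS
        have := hSmax _ hdiss2
        rw [Finset.card_insert_of_notMem hv] at this
        omega
      · -- u has a neighbor u' in S : swap u ↦ v decreases φ
        have hcard1 : (S.filter (fun w => Gᶜ.Adj u w)).card = 1 := by
          have := hSdiss' u huS.1
          omega
        obtain ⟨u', hu'⟩ := Finset.card_eq_one.1 hcard1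
        have hu'S : u' ∈ S ∧ Gᶜ.Adj u u' := by
          have : u' ∈ S.filter (fun w => Gᶜ.Adj u w) := by
            rw [hu']; exact Finset.mem_singleton_self u'
          exact Finset.mem_filter.1 this
        have hvu' : ¬ Gᶜ.Adj v u' := by
          intro hadj
          have := huniq u' hu'S.1 hadj
          subst this
          exact Gᶜ.irrefl hu'S.2
        set T := insert v (S.erase u) with hT
        have hvnotin : v ∉ S.erase u := fun h => hv (Finset.mem_of_mem_erase h)
        have hTcard : T.card = S.card := by
          rw [hT, Finset.card_insert_of_notMem hvnotin, Finset.card_erase_of_mem huS.1]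
          have : 1 ≤ S.card := Finset.card_pos.2 ⟨u, huS.1⟩
          omega
        -- no Gᶜ-neighbor of v inside T
        have hvT : ∀ w ∈ T, ¬ Gᶜ.Adj v w := by
          intro w hw hadj
          rcases Finset.mem_insert.1 hw with rfl | hwS
          · exact Gᶜ.irrefl hadj
          · have := huniq w (Finset.mem_of_mem_erase hwS) hadj
            subst this
            exact Finset.notMem_erase w S hwS
        have hTdiss : IsDissocSet Gᶜ T := by
          rw [isDissocSet_iff]
          intro x hx
          rcases Finset.mem_insert.1 hx with rfl | hxS
          · have : T.filter (fun w => Gᶜ.Adj x w) = ∅ := by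
              rw [Finset.filter_eq_empty_iff]
              exact hvT
            rw [this]
            simp
          · have hsub : T.filter (fun w => Gᶜ.Adj x w) ⊆ S.filter (fun w => Gᶜ.Adj x w) := by
              intro w hw
              rw [Finset.mem_filter] at hw
              rcases Finset.mem_insert.1 hw.1 with rfl | hwS
              · exact absurd hw.2.symm (hvT x (Finset.mem_insert_of_mem hxS))
              · exact Finset.mem_filter.2 ⟨Finset.mem_of_mem_erase hwS, hw.2⟩
            exact le_trans (Finset.card_le_card hsub)
              (hSdiss' x (Finset.mem_of_mem_erase hxS))
        -- φ decreases strictly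
        have hssub : (T ×ˢ T).filter (fun p => Gᶜ.Adj p.1 p.2) ⊂
            (S ×ˢ S).filter (fun p => Gᶜ.Adj p.1 p.2) := by
          constructor
          · rintro ⟨x, y⟩ hp
            rw [Finset.mem_filter, Finset.mem_product] at hp ⊢
            obtain ⟨⟨hx, hy⟩, hadj⟩ := hp
            have hxS : x ∈ S := by
              rcases Finset.mem_insert.1 hx with rfl | h
              · exact absurd hadj (hvT y hy)
              · exact Finset.mem_of_mem_erase h
            have hyS : y ∈ S := by
              rcases Finset.mem_insert.1 hy with rfl | h
              · exact absurd hadj.symm (hvT x hx)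
              · exact Finset.mem_of_mem_erase h
            exact ⟨⟨hxS, hyS⟩, hadj⟩
          · intro hsup
            have : (u, u') ∈ (T ×ˢ T).filter (fun p => Gᶜ.Adj p.1 p.2) := by
              apply hsup
              rw [Finset.mem_filter, Finset.mem_product]
              exact ⟨⟨huS.1, hu'S.1⟩, hu'S.2⟩
            rw [Finset.mem_filter, Finset.mem_product] at this
            have huT : u ∈ T := this.1.1
            rcases Finset.mem_insert.1 huT with h | h
            · exact hvu h.symm
            · exact Finset.notMem_erase u S h
        have hφlt : φ T < φ S := Finset.card_lt_card hssub
        have hTmem : T ∈ 𝒮.filter (fun X => X.card = S₀.card) := by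
          rw [Finset.mem_filter]
          constructor
          · rw [h𝒮, Finset.mem_filter]
            exact ⟨Finset.mem_powerset.2 (Finset.subset_univ _), hTdiss⟩
          · rw [hTcard, hScard0]
        have := hSmin T hTmem
        omega
  -- outside of S is nonempty, S has ≥ 2 elements
  have hvout : ∃ v : Fin n, v ∉ S := by
    by_contra hall
    push_neg at hall
    have : Finset.univ ⊆ S := fun v _ => hall v
    have := Finset.card_le_card this
    rw [Finset.card_univ, Fintype.card_fin] at this
    omega
  obtain ⟨v₀, hv₀⟩ := hvout
  have hs2 : 2 ≤ S.card := le_trans (key v₀ hv₀) (Finset.card_le_card (Finset.filter_subset _ _))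
  set m := n - S.card with hm
  have hmn : S.card + m = n := by omega
  have hm1 : 1 ≤ m := by omega
  -- the complement vertex set and the induced graph on it
  set C := Finset.univ \ S with hC
  have hCcard : C.card = m := by
    rw [hC, Finset.card_sdiff_of_subset (Finset.subset_univ _), Finset.card_univ, Fintype.card_fin]
  have hCmem : ∀ x : Fin n, x ∈ C ↔ x ∉ S := by
    intro x
    rw [hC, Finset.mem_sdiff]
    simp
  set e := Finset.equivFinOfCardEq hCcard with he
  set G' : SimpleGraph (Fin m) := G.comap (fun j => ((e.symm j : C) : Fin n)) with hG'
  have hfree' : ¬ containsCopy (cocktail (2*k+1)) G' := by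
    rintro ⟨g, hg⟩
    apply hfree
    refine ⟨⟨fun a => ((e.symm (g a) : C) : Fin n), ?_⟩, ?_⟩
    · intro a b hab
      exact g.injective (e.symm.injective (Subtype.ext hab))
    · intro a b hab
      exact hg a b hab
  have hIH := IH m (by omega) G' hfree'
  have hE'card : Nat.card G'.edgeSet = G'.edgeFinset.card := by
    rw [Nat.card_eq_fintype_card, SimpleGraph.edgeFinset_card]
  rw [hE'card] at hIH
  -- now the edge counting
  have h2e := SimpleGraph.two_mul_card_edgeFinset (G := G)
  have hPP : (Finset.univ.filter fun ((x,y) : Fin n × Fin n) => G.Adj x y) =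
      (Finset.univ.filter fun (p : Fin n × Fin n) => G.Adj p.1 p.2) := by
    apply Finset.filter_congr
    rintro ⟨x, y⟩ _
    exact Iff.rfl
  rw [hPP] at h2e
  set P := Finset.univ.filter fun (p : Fin n × Fin n) => G.Adj p.1 p.2 with hPdef
  -- split into four pieces
  have hsplit1 : P.card = (P.filter (fun p => p.1 ∈ S)).card
      + (P.filter (fun p => ¬ p.1 ∈ S)).card :=
    (Finset.card_filter_add_card_filter_not _).symm
  have hsplit2 : (P.filter (fun p => p.1 ∈ S)).card =
      ((P.filter (fun p => p.1 ∈ S)).filter (fun p => p.2 ∈ S)).card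
      + ((P.filter (fun p => p.1 ∈ S)).filter (fun p => ¬ p.2 ∈ S)).card :=
    (Finset.card_filter_add_card_filter_not _).symm
  have hsplit3 : (P.filter (fun p => ¬ p.1 ∈ S)).card =
      ((P.filter (fun p => ¬ p.1 ∈ S)).filter (fun p => p.2 ∈ S)).card
      + ((P.filter (fun p => ¬ p.1 ∈ S)).filter (fun p => ¬ p.2 ∈ S)).card :=
    (Finset.card_filter_add_card_filter_not _).symm
  -- piece SS
  have hB11 : ((P.filter (fun p => p.1 ∈ S)).filter (fun p => p.2 ∈ S)).card + S.card
      ≤ S.card*S.card := by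
    have hsub : ((P.filter (fun p => p.1 ∈ S)).filter (fun p => p.2 ∈ S)) ⊆
        (S ×ˢ S) \ S.diag := by
      rintro ⟨x, y⟩ hp
      simp only [Finset.mem_filter, hPdef, Finset.mem_univ, true_and] at hp
      obtain ⟨⟨hadj, hx⟩, hy⟩ := hp
      rw [Finset.mem_sdiff, Finset.mem_product, Finset.mem_diag]
      exact ⟨⟨hx, hy⟩, fun h => hadj.ne h.2⟩
    have h1 := Finset.card_le_card hsub
    have hds : S.diag ⊆ S ×ˢ S := by
      intro p hp
      rw [Finset.mem_diag] at hp
      rw [Finset.mem_product]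
      exact ⟨hp.1, hp.2 ▸ hp.1⟩
    have h2 : ((S ×ˢ S) \ S.diag).card + S.diag.card = (S ×ˢ S).card :=
      Finset.card_sdiff_add_card_eq_card hds
    rw [Finset.diag_card, Finset.card_product] at h2
    omega
  -- piece OS (fst outside, snd inside)
  have hB01 : ((P.filter (fun p => ¬ p.1 ∈ S)).filter (fun p => p.2 ∈ S)).card + 2*m
      ≤ m*S.card := by
    rw [Finset.card_eq_sum_card_fiberwise (f := fun p => p.1) (t := C) (fun p hp => by
      rw [Finset.mem_coe, Finset.mem_filter, Finset.mem_filter] at hp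
      rw [Finset.mem_coe, hC, Finset.mem_sdiff]
      exact ⟨Finset.mem_univ _, hp.1.2⟩)]
    have hfibeq : ∀ v ∈ C, (((P.filter (fun p => ¬ p.1 ∈ S)).filter
        (fun p => p.2 ∈ S)).filter (fun p => p.1 = v)).card
        = (S.filter (fun u => G.Adj v u)).card := by
      intro v hvC
      rw [hC, Finset.mem_sdiff] at hvC
      refine Finset.card_nbij' Prod.snd (fun u => (v, u)) ?_ ?_ ?_ ?_
      · rintro ⟨x, y⟩ hp
        simp only [Finset.mem_coe, Finset.mem_filter, hPdef, Finset.mem_univ, true_and] at hp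
        obtain ⟨⟨⟨hadj, hx⟩, hy⟩, heq⟩ := hp
        subst heq
        exact Finset.mem_filter.2 ⟨hy, hadj⟩
      · intro u hu
        rw [Finset.mem_coe, Finset.mem_filter] at hu
        simp only [Finset.mem_coe, Finset.mem_filter, hPdef, Finset.mem_univ, true_and]
        exact ⟨⟨⟨hu.2, hvC.2⟩, hu.1⟩, trivial⟩
      · rintro ⟨x, y⟩ hp
        simp only [Finset.mem_coe, Finset.mem_filter, hPdef, Finset.mem_univ, true_and] at hp
        obtain ⟨⟨⟨hadj, hx⟩, hy⟩, heq⟩ := hp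
        subst heq
        rfl
      · intro u _
        rfl
    rw [Finset.sum_congr rfl hfibeq]
    -- each vertex outside S has ≤ s-2 G-neighbors in S
    have hper : ∀ v ∈ C, (S.filter (fun u => G.Adj v u)).card + 2 ≤ S.card := by
      intro v hvC
      rw [hC, Finset.mem_sdiff] at hvC
      have hkey := key v hvC.2
      have hpart : (S.filter (fun u => G.Adj v u)).card
          + (S.filter (fun u => ¬ G.Adj v u)).card = S.card :=
        Finset.card_filter_add_card_filter_not _
      have hcompl : S.filter (fun u => Gᶜ.Adj v u) ⊆ S.filter (fun u => ¬ G.Adj v u) := by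
        intro u hu
        rw [Finset.mem_filter] at hu ⊢
        exact ⟨hu.1, hu.2.2⟩
      have := Finset.card_le_card hcompl
      omega
    calc ∑ v ∈ C, (S.filter (fun u => G.Adj v u)).card + 2*m
        = ∑ v ∈ C, ((S.filter (fun u => G.Adj v u)).card + 2) := by
          rw [Finset.sum_add_distrib, Finset.sum_const, hCcard, smul_eq_mul]
          omega
      _ ≤ ∑ v ∈ C, S.card := Finset.sum_le_sum hper
      _ = m*S.card := by rw [Finset.sum_const, hCcard, smul_eq_mul]
  -- piece SO equals piece OS by swapping
  have hB10 : ((P.filter (fun p => p.1 ∈ S)).filter (fun p => ¬ p.2 ∈ S)).card =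
      ((P.filter (fun p => ¬ p.1 ∈ S)).filter (fun p => p.2 ∈ S)).card := by
    refine Finset.card_nbij' Prod.swap Prod.swap ?_ ?_ ?_ ?_
    · rintro ⟨x, y⟩ hp
      simp only [Finset.mem_coe, Finset.mem_filter, hPdef, Finset.mem_univ, true_and] at hp ⊢
      exact ⟨⟨hp.1.1.symm, hp.2⟩, hp.1.2⟩
    · rintro ⟨x, y⟩ hp
      simp only [Finset.mem_coe, Finset.mem_filter, hPdef, Finset.mem_univ, true_and] at hp ⊢
      exact ⟨⟨hp.1.1.symm, hp.2⟩, hp.1.2⟩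
    · intro p _; exact Prod.swap_swap p
    · intro p _; exact Prod.swap_swap p
  -- piece OO equals twice the edge count of G'
  have hmemC : ∀ p : Fin n × Fin n,
      p ∈ (P.filter (fun p => ¬ p.1 ∈ S)).filter (fun p => ¬ p.2 ∈ S) →
      p.1 ∈ C ∧ p.2 ∈ C ∧ G.Adj p.1 p.2 := by
    intro p hp
    rw [Finset.mem_filter, Finset.mem_filter, hPdef, Finset.mem_filter] at hp
    refine ⟨?_, ?_, hp.1.1.2⟩
    · rw [hC, Finset.mem_sdiff]; exact ⟨Finset.mem_univ _, hp.1.2⟩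
    · rw [hC, Finset.mem_sdiff]; exact ⟨Finset.mem_univ _, hp.2⟩
  have hB00 : ((P.filter (fun p => ¬ p.1 ∈ S)).filter (fun p => ¬ p.2 ∈ S)).card =
      2 * Nat.card G'.edgeSet := by
    have hE'card : Nat.card G'.edgeSet = G'.edgeFinset.card := by
      rw [Nat.card_eq_fintype_card, SimpleGraph.edgeFinset_card]
    have h2e' := SimpleGraph.two_mul_card_edgeFinset (G := G')
    have hPP' : (Finset.univ.filter fun ((x,y) : Fin m × Fin m) => G'.Adj x y) =
        (Finset.univ.filter fun (q : Fin m × Fin m) => G'.Adj q.1 q.2) := by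
      apply Finset.filter_congr
      rintro ⟨x, y⟩ _
      exact Iff.rfl
    rw [hPP'] at h2e'
    rw [hE'card, h2e']
    refine Finset.card_bij'
      (fun p hp => (e ⟨p.1, (hmemC p hp).1⟩, e ⟨p.2, (hmemC p hp).2.1⟩))
      (fun q _ => (((e.symm q.1 : C) : Fin n), ((e.symm q.2 : C) : Fin n))) ?_ ?_ ?_ ?_
    · intro p hp
      rw [Finset.mem_filter]
      refine ⟨Finset.mem_univ _, ?_⟩
      show G.Adj ((e.symm (e ⟨p.1, (hmemC p hp).1⟩) : C) : Fin n)
        ((e.symm (e ⟨p.2, (hmemC p hp).2.1⟩) : C) : Fin n)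
      rw [Equiv.symm_apply_apply, Equiv.symm_apply_apply]
      exact (hmemC p hp).2.2
    · intro q hq
      rw [Finset.mem_filter] at hq
      have hadj : G.Adj ((e.symm q.1 : C) : Fin n) ((e.symm q.2 : C) : Fin n) := hq.2
      have hc1 : ((e.symm q.1 : C) : Fin n) ∉ S := (hCmem _).1 (e.symm q.1).2
      have hc2 : ((e.symm q.2 : C) : Fin n) ∉ S := (hCmem _).1 (e.symm q.2).2
      rw [Finset.mem_filter, Finset.mem_filter, hPdef, Finset.mem_filter]
      exact ⟨⟨⟨Finset.mem_univ _, hadj⟩, hc1⟩, hc2⟩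
    · intro p hp
      have e1 : (e.symm (e ⟨p.1, (hmemC p hp).1⟩) : C) = ⟨p.1, (hmemC p hp).1⟩ :=
        Equiv.symm_apply_apply _ _
      have e2 : (e.symm (e ⟨p.2, (hmemC p hp).2.1⟩) : C) = ⟨p.2, (hmemC p hp).2.1⟩ :=
        Equiv.symm_apply_apply _ _
      refine Prod.ext ?_ ?_
      · show ((e.symm (e ⟨p.1, (hmemC p hp).1⟩) : C) : Fin n) = p.1
        rw [e1]
      · show ((e.symm (e ⟨p.2, (hmemC p hp).2.1⟩) : C) : Fin n) = p.2
        rw [e2]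
    · intro q hq
      refine Prod.ext ?_ ?_
      · show e ⟨((e.symm q.1 : C) : Fin n), _⟩ = q.1
        rw [show (⟨((e.symm q.1 : C) : Fin n), _⟩ : {x // x ∈ C}) = e.symm q.1 from
          Subtype.coe_eta _ _]
        exact Equiv.apply_symm_apply _ _
      · show e ⟨((e.symm q.2 : C) : Fin n), _⟩ = q.2
        rw [show (⟨((e.symm q.2 : C) : Fin n), _⟩ : {x // x ∈ C}) = e.symm q.2 from
          Subtype.coe_eta _ _]
        exact Equiv.apply_symm_apply _ _
  -- gg recursion and monotonicity
  have hgg : gg k n ≤ 2*m + gg k m := by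
    rw [gg_rec (by omega) hn]
    have h1 : n - 2*k ≤ m := by omega
    have h2 : gg k (n-2*k) ≤ gg k m := gg_mono h1
    omega
  -- final arithmetic
  have hid1 : 2 * n.choose 2 = n*(n-1) := two_mul_choose_two n
  have hid2 : 2 * m.choose 2 = m*(m-1) := two_mul_choose_two m
  have hid3 : n*(n-1) + n = n*n := mul_pred_add n
  have hid4 : m*(m-1) + m = m*m := mul_pred_add m
  have hid5 : n*n = S.card*S.card + 2*(m*S.card) + m*m := by
    have h := hmn
    have hring : (S.card + m)*(S.card + m) = S.card*S.card + 2*(m*S.card) + m*m := by ring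
    rw [h] at hring
    exact hring.symm.symm ▸ hring
  rw [hecard]
  omega

lemma compl_edge_count {n : ℕ} (G : SimpleGraph (Fin n)) :
    Nat.card G.edgeSet + Nat.card Gᶜ.edgeSet = n.choose 2 := by
  classical
  rw [Nat.card_eq_fintype_card, Nat.card_eq_fintype_card,
    ← SimpleGraph.edgeFinset_card, ← SimpleGraph.edgeFinset_card]
  have hun : G.edgeFinset ∪ Gᶜ.edgeFinset = (⊤ : SimpleGraph (Fin n)).edgeFinset := by
    ext e
    refine Sym2.ind (fun a b => ?_) e
    simp only [Finset.mem_union, SimpleGraph.mem_edgeFinset, SimpleGraph.mem_edgeSet,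
      SimpleGraph.compl_adj, SimpleGraph.top_adj]
    have hne : G.Adj a b → a ≠ b := fun h => h.ne
    tauto
  have h1 : G.edgeFinset.card + Gᶜ.edgeFinset.card = (G.edgeFinset ∪ Gᶜ.edgeFinset).card :=
    (Finset.card_union_of_disjoint
      (SimpleGraph.disjoint_edgeFinset.2 disjoint_compl_right)).symm
  rw [h1, hun, SimpleGraph.card_edgeFinset_top_eq_card_choose_two, Fintype.card_fin]

lemma exH_compl_free {k n : ℕ} (hk : 1 ≤ k) :
    ¬ containsCopy (cocktail (2*k+1)) (exH k n)ᶜ := by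
  intro hcopy
  obtain ⟨S, hcard, hdiss⟩ := dissoc_of_copy _ hcopy
  rw [compl_compl] at hdiss
  exact exH_no_dissoc hk S hcard hdiss

lemma bot_free {k n : ℕ} (hk : 2 ≤ k) :
    ¬ containsCopy (cocktail (2*k+1)) (⊥ : SimpleGraph (Fin n)) := by
  rintro ⟨f, hf⟩
  have h0 : (0:ℕ) < 2*k+1 := by omega
  have h2 : (2:ℕ) < 2*k+1 := by omega
  have hadj : (cocktail (2*k+1)).Adj ⟨0, h0⟩ ⟨2, h2⟩ := by
    rw [cocktail_adj]
    refine ⟨Fin.ne_of_val_ne (show (0:ℕ) ≠ 2 by norm_num), ?_⟩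
    show (0:ℕ)/2 ≠ (2:ℕ)/2
    norm_num
  exact hf _ _ hadj

lemma gg_le_choose {k n : ℕ} (hk : 2 ≤ k) : gg k n ≤ n.choose 2 := by
  have h1 := compl_edge_count (exH k n)
  have h2 := exH_card_edges (k := k) (n := n) (by omega)
  omega

lemma exNum_add_gg {k : ℕ} (hk : 2 ≤ k) (n : ℕ) :
    exNum n (cocktail (2*k+1)) + gg k n = n.choose 2 := by
  classical
  have hne : {m | ∃ G : SimpleGraph (Fin n),
      ¬ containsCopy (cocktail (2*k+1)) G ∧ Nat.card G.edgeSet = m}.Nonempty := by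
    refine ⟨Nat.card (⊥ : SimpleGraph (Fin n)).edgeSet, ⊥, bot_free hk, rfl⟩
  have hmem : (n.choose 2 - gg k n) ∈ {m | ∃ G : SimpleGraph (Fin n),
      ¬ containsCopy (cocktail (2*k+1)) G ∧ Nat.card G.edgeSet = m} := by
    refine ⟨(exH k n)ᶜ, exH_compl_free (by omega), ?_⟩
    have h1 := compl_edge_count (exH k n)
    have h2 := exH_card_edges (k := k) (n := n) (by omega)
    omega
  have hbdd : BddAbove {m | ∃ G : SimpleGraph (Fin n),
      ¬ containsCopy (cocktail (2*k+1)) G ∧ Nat.card G.edgeSet = m} := by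
    refine ⟨n.choose 2, ?_⟩
    rintro m ⟨G, hfree, rfl⟩
    have := master_le hk n G hfree
    omega
  have hle : exNum n (cocktail (2*k+1)) ≤ n.choose 2 - gg k n := by
    apply csSup_le hne
    rintro m ⟨G, hfree, rfl⟩
    have := master_le hk n G hfree
    omega
  have hge : n.choose 2 - gg k n ≤ exNum n (cocktail (2*k+1)) := le_csSup hbdd hmem
  have hggle := gg_le_choose (n := n) hk
  omega

theorem stmt10 (k : ℕ) (hk : 2 ≤ k) (n : ℕ) :
    (2 * k < n → exNum n (cocktail (2 * k + 1)) =
      Nat.choose (2 * k) 2 + (2 * k - 2) * (n - 2 * k) +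
        exNum (n - 2 * k) (cocktail (2 * k + 1))) ∧
    (n ≤ 2 * k → exNum n (cocktail (2 * k + 1)) = Nat.choose n 2) := by
  constructor
  · intro hlt
    have h1 := exNum_add_gg hk n
    have h2 := exNum_add_gg hk (n - 2*k)
    have hgr := gg_rec (show 1 ≤ k by omega) hlt
    have hc := choose_two_add (2*k) (n - 2*k)
    have hnn : 2*k + (n - 2*k) = n := by omega
    rw [hnn] at hc
    have hsum : (2*k - 2) + 2 = 2*k := by omega
    have hprod : (2*k - 2)*(n - 2*k) + 2*(n - 2*k) = 2*k*(n - 2*k) := by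
      rw [← Nat.add_mul, hsum]
    omega
  · intro hle
    have h1 := exNum_add_gg hk n
    have h2 := gg_of_le (show 1 ≤ k by omega) hle
    omega
end
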